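/- arXiv:2106.05527 — 2 statements merged into one kernel-verified Lean document; each statement's English description precedes it below -/
import Mathlib

section
/- For the Reciprocal VESDE with g_RVE(t) = σ_max(σ_min/σ_max)^{ε/t}·√(2ε log(σ_max/σ_min))/t for t > 0 and g_RVE(0) = 0, the accumulated variance satisfies ∫₀ᵗ g_RVE²(s) ds = σ_max²(σ_min/σ_max)^{2ε/t} for every t > 0. In particular, the variance at t = ε equals σ_min² and the variance tends to σ_max² as t → ∞. -/
open Real Filter Set

/-- For the Reciprocal VESDE, ∫₀ᵗ g_RVE²(s) ds = σmax²(σmin/σmax)^{2ε/t} for t > 0;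
    the variance at t = ε is σmin², and it tends to σmax² as t → ∞. -/
theorem rvesde_accumulated_variance (σmin σmax ε : ℝ)
    (h0 : 0 < σmin) (h1 : σmin < σmax) (hε : 0 < ε) :
    (∀ t : ℝ, 0 < t →
      ∫ s in (0:ℝ)..t,
        (if s = 0 then 0
         else σmax^2 * (σmin / σmax) ^ (2 * ε / s) * (2 * ε * Real.log (σmax / σmin)) / s^2)
      = σmax^2 * (σmin / σmax) ^ (2 * ε / t))
    ∧ σmax^2 * (σmin / σmax) ^ (2 * ε / ε) = σmin^2
    ∧ Filter.Tendsto (fun t : ℝ => σmax^2 * (σmin / σmax) ^ (2 * ε / t))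
        Filter.atTop (nhds (σmax^2)) := by
  have hσ : (0:ℝ) < σmax := lt_trans h0 h1
  have hr : (0:ℝ) < σmin / σmax := div_pos h0 hσ
  have hL : 0 < Real.log (σmax / σmin) := Real.log_pos ((one_lt_div h0).mpr h1)
  set L := Real.log (σmax / σmin) with hLdef
  have hlogr : Real.log (σmin / σmax) = -L := by
    rw [hLdef, ← Real.log_inv, inv_div]
  set c := 2 * ε * L with hc
  have hcpos : 0 < c := by positivity
  have hrw : ∀ s : ℝ, (σmin / σmax) ^ (2 * ε / s) = Real.exp (-(c / s)) := by
    intro s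
    rw [Real.rpow_def_of_pos hr, hlogr, hc]
    congr 1
    ring
  -- the limit c/s → ∞ as s → 0⁺
  have hdiv : Tendsto (fun s : ℝ => c / s) (nhdsWithin 0 (Ioi 0)) atTop := by
    simpa [div_eq_mul_inv] using tendsto_inv_nhdsGT_zero.const_mul_atTop hcpos
  refine ⟨?_, ?_, ?_⟩
  · intro t ht
    set G : ℝ → ℝ := fun s => if s = 0 then 0 else σmax^2 * Real.exp (-(c / s)) with hG
    set f : ℝ → ℝ := fun s =>
      if s = 0 then 0 else σmax^2 * Real.exp (-(c / s)) * c / s^2 with hf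
    -- continuity of G on [0,t]
    have hGcont : ContinuousOn G (Icc 0 t) := by
      intro x hx
      rcases eq_or_lt_of_le hx.1 with h | h
      · subst h
        apply ContinuousWithinAt.mono _ (Icc_subset_Ici_self)
        rw [← continuousWithinAt_Ioi_iff_Ici]
        have : Tendsto (fun s : ℝ => σmax^2 * Real.exp (-(c / s)))
            (nhdsWithin 0 (Ioi 0)) (nhds (σmax^2 * 0)) := by
          exact (Real.tendsto_exp_atBot.comp
            (tendsto_neg_atTop_atBot.comp hdiv)).const_mul _
        unfold ContinuousWithinAt
        rw [show G 0 = σmax^2 * 0 by simp [hG]]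
        apply this.congr'
        filter_upwards [self_mem_nhdsWithin] with s hs
        simp [hG, (ne_of_gt (show (0:ℝ) < s from hs))]
      · apply ContinuousAt.continuousWithinAt
        have heq : G =ᶠ[nhds x] fun s => σmax^2 * Real.exp (-(c / s)) := by
          filter_upwards [eventually_ne_nhds (ne_of_gt h)] with s hs
          simp [hG, hs]
        apply ContinuousAt.congr _ heq.symm
        exact (Real.continuous_exp.continuousAt.comp
          ((continuousAt_const.div continuousAt_id (ne_of_gt h)).neg)).const_mul _
    -- continuity of f on [0,t]
    have hfcont : ContinuousOn f (Icc 0 t) := by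
      intro x hx
      rcases eq_or_lt_of_le hx.1 with h | h
      · subst h
        apply ContinuousWithinAt.mono _ (Icc_subset_Ici_self)
        rw [← continuousWithinAt_Ioi_iff_Ici]
        have h2 : Tendsto (fun u : ℝ => σmax^2 / c * (u^2 * Real.exp (-u)))
            atTop (nhds (σmax^2 / c * 0)) :=
          (tendsto_pow_mul_exp_neg_atTop_nhds_zero 2).const_mul _
        have h3 : Tendsto (fun s : ℝ => σmax^2 / c * ((c/s)^2 * Real.exp (-(c/s))))
            (nhdsWithin 0 (Ioi 0)) (nhds (σmax^2 / c * 0)) := h2.comp hdiv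
        unfold ContinuousWithinAt
        rw [show f 0 = σmax^2 / c * 0 by simp [hf]]
        apply h3.congr'
        filter_upwards [self_mem_nhdsWithin] with s hs
        have hs0 : s ≠ 0 := ne_of_gt hs
        simp only [hf, if_neg hs0]
        field_simp
      · apply ContinuousAt.continuousWithinAt
        have heq : f =ᶠ[nhds x] fun s => σmax^2 * Real.exp (-(c / s)) * c / s^2 := by
          filter_upwards [eventually_ne_nhds (ne_of_gt h)] with s hs
          simp [hf, hs]
        apply ContinuousAt.congr _ heq.symm
        apply ContinuousAt.div
        · exact (((Real.continuous_exp.continuousAt.comp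
            ((continuousAt_const.div continuousAt_id (ne_of_gt h)).neg)).const_mul
              _).mul continuousAt_const)
        · exact (continuous_pow 2).continuousAt
        · positivity
    -- derivative on (0,t)
    have hderiv : ∀ x ∈ Ioo (0:ℝ) t, HasDerivWithinAt G (f x) (Ioi x) x := by
      intro x hx
      have hx0 : x ≠ 0 := ne_of_gt hx.1
      have heq : G =ᶠ[nhds x] fun s => σmax^2 * Real.exp (-(c / s)) := by
        filter_upwards [eventually_ne_nhds hx0] with s hs
        simp [hG, hs]
      have hd : HasDerivAt (fun s : ℝ => σmax^2 * Real.exp (-(c / s)))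
          (σmax^2 * (Real.exp (-(c / x)) * (c / x^2))) x := by
        have h1 : HasDerivAt (fun s : ℝ => -(c / s)) (c / x^2) x := by
          simpa [div_eq_mul_inv, mul_neg, Pi.neg_def] using ((hasDerivAt_inv hx0).const_mul c).neg
        exact (h1.exp).const_mul _
      have : HasDerivAt G (f x) x := by
        refine HasDerivAt.congr_of_eventuallyEq ?_ heq
        rw [show f x = σmax^2 * (Real.exp (-(c / x)) * (c / x^2)) by simp only [hf, if_neg hx0]; ring]
        exact hd
      exact this.hasDerivWithinAt
    -- integrability
    have hint : IntervalIntegrable f MeasureTheory.volume 0 t := by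
      apply ContinuousOn.intervalIntegrable
      rwa [uIcc_of_le ht.le]
    have key := intervalIntegral.integral_eq_sub_of_hasDeriv_right_of_le ht.le
      hGcont hderiv hint
    have hGt : G t = σmax^2 * Real.exp (-(c / t)) := by simp [hG, ne_of_gt ht]
    have hG0 : G 0 = 0 := by simp [hG]
    calc (∫ s in (0:ℝ)..t,
        (if s = 0 then 0
         else σmax^2 * (σmin / σmax) ^ (2 * ε / s) * (2 * ε * L) / s^2))
        = ∫ s in (0:ℝ)..t, f s := by
          apply intervalIntegral.integral_congr
          intro s _
          by_cases hs : s = 0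
          · simp [hf, hs]
          · simp only [hf, if_neg hs, hrw s, hc]
      _ = G t - G 0 := key
      _ = σmax^2 * (σmin / σmax) ^ (2 * ε / t) := by
          rw [hGt, hG0, hrw t, sub_zero]
  · have : 2 * ε / ε = (2:ℝ) := by field_simp
    rw [this, show ((2:ℝ)) = ((2:ℕ):ℝ) by norm_num, Real.rpow_natCast]
    field_simp
  · have h2 : Tendsto (fun t : ℝ => 2 * ε / t) atTop (nhds 0) :=
      tendsto_const_nhds.div_atTop tendsto_id
    have h3 : Tendsto (fun t : ℝ => (σmin / σmax) ^ (2 * ε / t)) atTop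
        (nhds ((σmin / σmax) ^ (0:ℝ))) :=
      (Real.continuousAt_const_rpow (ne_of_gt hr)).tendsto.comp h2
    rw [Real.rpow_zero] at h3
    simpa using h3.const_mul (σmax^2)
end

section
/- Let ε < T, g continuous positive on [ε,T], and λ such that λ/g² is nondecreasing, nonnegative, and absolutely continuous on [ε,T]. Suppose for each τ ∈ [ε,T] we have a 'truncated bound' ℓ(τ) := (1/2)∫_τ^T g²(t)a(t) dt ≥ D(τ) - D_T, where a : [ε,T] → ℝ is integrable, D : [ε,T] → ℝ and D_T ∈ ℝ (think D(τ) = KL(p_τ ‖ p_τ^θ), D_T = KL(p_T ‖ π), a(t) = E‖s_θ - ∇log p_t‖²). Then (1/2)∫_ε^T λ(t)a(t) dt + (λ(T)/g²(T))·D_T ≥ ∫_ε^T (λ/g²)'(τ)·D(τ) dτ + (λ(ε)/g²(ε))·D(ε). (Variational bound for general weighted diffusion loss, Theorem 1 / Corollary.) -/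
open MeasureTheory

/-- Variational bound for the general weighted diffusion loss (Theorem 1 / Corollary):
    if w = λ/g² is nonnegative, nondecreasing and absolutely continuous on [ε,T]
    (with derivative density dw ≥ 0 a.e.), a ≥ 0 is integrable, and for each τ the
    truncated bound (1/2)∫_τ^T g²a ≥ D(τ) - D_T holds, then
    ∫_ε^T dw·D + (λ(ε)/g²(ε))·D(ε) ≤ (1/2)∫_ε^T λ·a + (λ(T)/g²(T))·D_T. -/
theorem general_weighted_variational_bound (ε T DT : ℝ) (hεT : ε < T)
    (g lam dw a D : ℝ → ℝ)
    (hg : ContinuousOn g (Set.Icc ε T)) (hgpos : ∀ t ∈ Set.Icc ε T, 0 < g t)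
    (hAC : ∀ t ∈ Set.Icc ε T, lam t / g t ^ 2 = lam ε / g ε ^ 2 + ∫ s in ε..t, dw s)
    (hwε : 0 ≤ lam ε / g ε ^ 2)
    (hdwnn : ∀ᵐ τ ∂volume, τ ∈ Set.Icc ε T → 0 ≤ dw τ)
    (hdw : IntegrableOn dw (Set.Icc ε T))
    (ha : IntegrableOn a (Set.Icc ε T))
    (hann : ∀ t ∈ Set.Icc ε T, 0 ≤ a t)
    (hlama : IntegrableOn (fun t => lam t * a t) (Set.Icc ε T))
    (hdwD : IntegrableOn (fun τ => dw τ * D τ) (Set.Icc ε T))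
    (hbound : ∀ τ ∈ Set.Icc ε T, D τ - DT ≤ (1/2) * ∫ t in τ..T, g t ^ 2 * a t) :
    (∫ τ in ε..T, dw τ * D τ) + (lam ε / g ε ^ 2) * D ε
      ≤ (1/2) * (∫ t in ε..T, lam t * a t) + (lam T / g T ^ 2) * DT := by
  have hεT' : ε ≤ T := hεT.le
  have huIcc : Set.uIcc ε T = Set.Icc ε T := Set.uIcc_of_le hεT'
  -- notation
  set w0 : ℝ := lam ε / g ε ^ 2 with hw0_def
  set b : ℝ → ℝ := fun t => g t ^ 2 * a t with hb_def
  set G : ℝ → ℝ := fun s => ∫ t in s..T, b t with hG_def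
  set W : ℝ → ℝ := fun t => ∫ s in ε..t, dw s with hW_def
  -- basic integrability / continuity facts
  have hg2 : ContinuousOn (fun t => g t ^ 2) (Set.Icc ε T) := hg.pow 2
  have hb : IntegrableOn b (Set.Icc ε T) := ha.continuousOn_mul hg2 isCompact_Icc
  have hGcont : ContinuousOn G (Set.Icc ε T) := by
    have h := intervalIntegral.continuousOn_primitive_interval_left
      (f := b) (a := ε) (b := T) (μ := volume) (by rwa [huIcc])
    rwa [huIcc] at h
  have hWcont : ContinuousOn W (Set.Icc ε T) := by
    have h := intervalIntegral.continuousOn_primitive_interval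
      (f := dw) (a := ε) (b := T) (μ := volume) (by rwa [huIcc])
    rwa [huIcc] at h
  have hWb : IntegrableOn (fun t => W t * b t) (Set.Icc ε T) :=
    hb.continuousOn_mul hWcont isCompact_Icc
  have hdwG : IntegrableOn (fun s => dw s * G s) (Set.Icc ε T) := by
    have h : IntegrableOn (fun s => G s * dw s) (Set.Icc ε T) :=
      hdw.continuousOn_mul hGcont isCompact_Icc
    exact h.congr_fun (fun x _ => mul_comm _ _) measurableSet_Icc
  have hbI : IntervalIntegrable b volume ε T := by
    rw [intervalIntegrable_iff_integrableOn_Icc_of_le hεT']; exact hb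
  have hWbI : IntervalIntegrable (fun t => W t * b t) volume ε T := by
    rw [intervalIntegrable_iff_integrableOn_Icc_of_le hεT']; exact hWb
  have hdwGI : IntervalIntegrable (fun s => dw s * G s) volume ε T := by
    rw [intervalIntegrable_iff_integrableOn_Icc_of_le hεT']; exact hdwG
  have hdwI : IntervalIntegrable dw volume ε T := by
    rw [intervalIntegrable_iff_integrableOn_Icc_of_le hεT']; exact hdw
  have hdwDI : IntervalIntegrable (fun τ => dw τ * D τ) volume ε T := by
    rw [intervalIntegrable_iff_integrableOn_Icc_of_le hεT']; exact hdwD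
  -- Step 1: split ∫ λ a = w0 ∫ b + ∫ W b
  have hsplit : (∫ t in ε..T, lam t * a t)
      = w0 * (∫ t in ε..T, b t) + ∫ t in ε..T, W t * b t := by
    rw [← intervalIntegral.integral_const_mul,
      ← intervalIntegral.integral_add (hbI.const_mul w0) hWbI]
    apply intervalIntegral.integral_congr
    intro t ht
    rw [huIcc] at ht
    show lam t * a t = w0 * b t + W t * b t
    have hgt : g t ≠ 0 := (hgpos t ht).ne'
    have h1 : lam t * a t = (lam t / g t ^ 2) * b t := by
      simp only [hb_def]
      field_simp
    rw [h1, hAC t ht]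
    simp only [hW_def, hw0_def]
    ring
  -- Step 2: Fubini: ∫ W b = ∫ dw G
  have hfub : (∫ t in ε..T, W t * b t) = ∫ s in ε..T, dw s * G s := by
    set μ : Measure ℝ := volume.restrict (Set.Ioc ε T) with hμ_def
    have hdwμ : Integrable dw μ := hdw.mono_set Set.Ioc_subset_Icc_self
    have hbμ : Integrable b μ := hb.mono_set Set.Ioc_subset_Icc_self
    have hS : MeasurableSet {p : ℝ × ℝ | p.1 ≤ p.2} :=
      measurableSet_le measurable_fst measurable_snd
    have hprod : Integrable (fun p : ℝ × ℝ => dw p.1 * b p.2) (μ.prod μ) :=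
      hdwμ.mul_prod hbμ
    have hint : Integrable
        (Function.uncurry fun s t =>
          Set.indicator {p : ℝ × ℝ | p.1 ≤ p.2} (fun p => dw p.1 * b p.2) (s, t))
        (μ.prod μ) := by
      have heq : (Function.uncurry fun s t =>
          Set.indicator {p : ℝ × ℝ | p.1 ≤ p.2} (fun p => dw p.1 * b p.2) (s, t))
          = Set.indicator {p : ℝ × ℝ | p.1 ≤ p.2} (fun p => dw p.1 * b p.2) := by
        ext ⟨s, t⟩; rfl
      rw [heq]
      exact hprod.indicator hS
    have swap := MeasureTheory.integral_integral_swap hint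
    -- left side of swap equals ∫ dw * G
    have hL : (∫ s, (∫ t,
        Set.indicator {p : ℝ × ℝ | p.1 ≤ p.2} (fun p => dw p.1 * b p.2) (s, t) ∂μ) ∂μ)
        = ∫ s, dw s * G s ∂μ := by
      apply integral_congr_ae
      filter_upwards [ae_restrict_mem measurableSet_Ioc] with s hs
      have h1 : (fun t => Set.indicator {p : ℝ × ℝ | p.1 ≤ p.2}
          (fun p => dw p.1 * b p.2) (s, t))
          = Set.indicator (Set.Ici s) (fun t => dw s * b t) := by
        ext t
        by_cases h : s ≤ t <;> simp [Set.indicator_apply, h]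
      rw [h1, integral_indicator measurableSet_Ici, hμ_def,
        Measure.restrict_restrict measurableSet_Ici]
      have h2 : Set.Ici s ∩ Set.Ioc ε T = Set.Icc s T := by
        ext t
        simp only [Set.mem_inter_iff, Set.mem_Ici, Set.mem_Ioc, Set.mem_Icc]
        constructor
        · rintro ⟨h1', h2', h3'⟩; exact ⟨h1', h3'⟩
        · rintro ⟨h1', h2'⟩; exact ⟨h1', hs.1.trans_le h1', h2'⟩
      rw [h2, MeasureTheory.integral_Icc_eq_integral_Ioc,
        MeasureTheory.integral_const_mul]
      congr 1
      rw [hG_def]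
      exact (intervalIntegral.integral_of_le hs.2).symm
    -- right side of swap equals ∫ W * b
    have hR : (∫ t, (∫ s,
        Set.indicator {p : ℝ × ℝ | p.1 ≤ p.2} (fun p => dw p.1 * b p.2) (s, t) ∂μ) ∂μ)
        = ∫ t, W t * b t ∂μ := by
      apply integral_congr_ae
      filter_upwards [ae_restrict_mem measurableSet_Ioc] with t ht
      have h1 : (fun s => Set.indicator {p : ℝ × ℝ | p.1 ≤ p.2}
          (fun p => dw p.1 * b p.2) (s, t))
          = Set.indicator (Set.Iic t) (fun s => dw s * b t) := by
        ext s
        by_cases h : s ≤ t <;> simp [Set.indicator_apply, h]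
      rw [h1, integral_indicator measurableSet_Iic, hμ_def,
        Measure.restrict_restrict measurableSet_Iic]
      have h2 : Set.Iic t ∩ Set.Ioc ε T = Set.Ioc ε t := by
        ext s
        simp only [Set.mem_inter_iff, Set.mem_Iic, Set.mem_Ioc]
        constructor
        · rintro ⟨h1', h2', h3'⟩; exact ⟨h2', h1'⟩
        · rintro ⟨h1', h2'⟩; exact ⟨h2', h1', h2'.trans ht.2⟩
      rw [h2, MeasureTheory.integral_mul_const]
      congr 1
      rw [hW_def]
      exact (intervalIntegral.integral_of_le ht.1.le).symm
    rw [intervalIntegral.integral_of_le hεT', intervalIntegral.integral_of_le hεT',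
      ← hL, ← hR]
    exact swap.symm
  -- Step 3: lower bound ∫ dw G
  have hmono : (∫ s in ε..T, (2 * (dw s * D s) - 2 * DT * dw s))
      ≤ ∫ s in ε..T, dw s * G s := by
    apply intervalIntegral.integral_mono_ae_restrict hεT'
      ((hdwDI.const_mul 2).sub (hdwI.const_mul (2 * DT))) hdwGI
    filter_upwards [ae_restrict_mem measurableSet_Icc,
      ae_restrict_of_ae hdwnn] with s hs hnn
    have hD : 2 * (D s - DT) ≤ G s := by
      have := hbound s hs
      rw [hG_def]
      linarith
    have := mul_le_mul_of_nonneg_left hD (hnn hs)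
    nlinarith [this]
  have hlin : (∫ s in ε..T, (2 * (dw s * D s) - 2 * DT * dw s))
      = 2 * (∫ s in ε..T, dw s * D s) - 2 * DT * (∫ s in ε..T, dw s) := by
    rw [intervalIntegral.integral_sub (hdwDI.const_mul 2) (hdwI.const_mul (2 * DT)),
      intervalIntegral.integral_const_mul, intervalIntegral.integral_const_mul]
  -- Step 4: bound at ε
  have hGε : 2 * (D ε - DT) ≤ ∫ t in ε..T, b t := by
    have := hbound ε ⟨le_refl ε, hεT'⟩
    linarith
  -- Step 5: value of w at T
  have hwT : lam T / g T ^ 2 = w0 + ∫ s in ε..T, dw s :=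
    hAC T ⟨hεT', le_refl T⟩
  -- combine
  have hmul := mul_le_mul_of_nonneg_left hGε hwε
  rw [hsplit, hfub, hwT]
  rw [hlin] at hmono
  nlinarith [hmono, hmul]
end
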